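/- Every continuous surjective homomorphism from a pseudocompact topological group onto a second countable topological group is an open map. -/

import Mathlib

/-!
Pseudocompactness of the completely regular space `G` means that every sequence of nonempty open
sets accumulates at some point. Applied to translates `gₙ W` this makes `G` precompact, so `H` is
covered by finitely many translates of the closed set `closure (f W)`, which therefore has an
interior point `h₀`; the neighbourhood `interior (closure (f W)) * h₀⁻¹` of `1` then lies in
`closure (f (W W⁻¹))`.
Applied to the sets `vₙ W ∩ f⁻¹ Bₙ`, where `f vₙ → h` along a countable neighbourhood basis `Bₙ`
of `h`, the accumulation principle shows `closure (f V) ⊆ f (V W W⁻¹)`. Together, `f U` is a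
neighbourhood of `1` for every neighbourhood `U` of `1`.
-/

open Set Filter Topology Pointwise

section CompletelyRegular

variable {X : Type*} [TopologicalSpace X] [CompletelyRegularSpace X]

theorem exists_continuous_nonneg_eq_one_support_subset {U : Set X} {x : X} (hU : IsOpen U)
    (hx : x ∈ U) :
    ∃ φ : X → ℝ, Continuous φ ∧ φ x = 1 ∧ (∀ y, 0 ≤ φ y) ∧ Function.support φ ⊆ U := by
  obtain ⟨g, hgc, hgx, hg1⟩ := CompletelyRegularSpace.completely_regular_isOpen x U hU hx
  refine ⟨fun y ↦ 1 - g y, by fun_prop, by simp [hgx], fun y ↦ sub_nonneg.2 (g y).2.2,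
    fun y hy ↦ ?_⟩
  by_contra hyU
  exact hy (by simp [hg1 hyU])

/-- Otherwise the sequence is locally finite, and `∑ n • φₙ`, with `φₙ` a bump of height one
supported in the `n`-th set, is continuous and unbounded. -/
theorem exists_forall_nhds_frequently_inter_nonempty
    (hX : ∀ f : X → ℝ, Continuous f → ∃ M : ℝ, ∀ x, |f x| ≤ M) {O : ℕ → Set X}
    (hO : ∀ n, IsOpen (O n)) (hne : ∀ n, (O n).Nonempty) :
    ∃ x, ∀ N ∈ 𝓝 x, ∃ᶠ n in atTop, (O n ∩ N).Nonempty := by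
  by_contra! hfin
  have hlf : LocallyFinite O := fun x ↦
    let ⟨N, hN, hN'⟩ := hfin x
    ⟨N, hN, Nat.frequently_atTop_iff_infinite.not_left.mp <|
      not_frequently.2 <| hN'.mono fun _ ↦ not_nonempty_iff_eq_empty.2⟩
  choose p hp using hne
  choose φ hφc hφp hφnn hφO using fun n ↦
    exists_continuous_nonneg_eq_one_support_subset (hO n) (hp n)
  have hsupp : ∀ n, Function.support (fun x ↦ n * φ n x) ⊆ O n := fun n x hx ↦
    hφO n (right_ne_zero_of_mul hx)
  obtain ⟨M, hM⟩ := hX (fun x ↦ ∑ᶠ n : ℕ, n * φ n x)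
    (continuous_finsum (fun n ↦ continuous_const.mul (hφc n)) (hlf.subset hsupp))
  obtain ⟨n, hn⟩ := exists_nat_gt M
  have hn_le : (n : ℝ) ≤ ∑ᶠ k : ℕ, k * φ k (p n) :=
    calc (n : ℝ) = n * φ n (p n) := by rw [hφp, mul_one]
      _ ≤ _ := single_le_finsum n ((hlf.point_finite (p n)).subset fun k hk ↦ hsupp k hk)
          fun k ↦ mul_nonneg k.cast_nonneg (hφnn k _)
  linarith [(abs_le.1 (hM (p n))).2]

end CompletelyRegular

theorem mem_smul_mul_inv_of_inter_nonempty {G : Type*} [Group G] {a b : G} {S T : Set G}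
    (h : (a • S ∩ b • T).Nonempty) : b ∈ a • (S * T⁻¹) := by
  obtain ⟨_, ⟨s, hs, rfl⟩, t, ht, hts⟩ := h
  refine ⟨s * t⁻¹, mul_mem_mul hs (inv_mem_inv.2 ht), ?_⟩
  simp only [smul_eq_mul] at hts ⊢
  rw [← mul_assoc, ← hts, mul_inv_cancel_right]

theorem Set.Finite.nonempty_interior_of_mul_eq_univ {H : Type*} [Group H] [TopologicalSpace H]
    [ContinuousConstSMul H H] {S C : Set H} (hS : S.Finite) (hC : IsClosed C)
    (h : S * C = univ) : (interior C).Nonempty := by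
  by_contra! hC0
  have hd : Dense (⋂₀ ((fun s ↦ (s • C)ᶜ) '' S)) := by
    refine (hS.image _).dense_sInter ?_ ?_ <;> rintro _ ⟨s, -, rfl⟩
    · exact (hC.smul s).isOpen_compl
    · rw [← interior_eq_empty_iff_dense_compl, interior_smul, hC0, smul_set_empty]
  rw [sInter_image, ← compl_iUnion₂, iUnion_smul_left_image, smul_eq_mul, h, compl_univ] at hd
  exact hd.nonempty.ne_empty rfl

section TopologicalGroup

variable {G : Type*} [Group G] [TopologicalSpace G] [IsTopologicalGroup G]

instance IsTopologicalGroup.completelyRegularSpace : CompletelyRegularSpace G := by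
  let := IsTopologicalGroup.rightUniformSpace G
  infer_instance

theorem exists_open_nhds_one_mul_inv_mul_subset {U : Set G} (hU : U ∈ 𝓝 1) :
    ∃ W : Set G, IsOpen W ∧ 1 ∈ W ∧ W * W⁻¹ * (W * W⁻¹) ⊆ U := by
  obtain ⟨V, hVo, hV1, hVU⟩ := exists_open_nhds_one_mul_subset hU
  obtain ⟨W, hWo, hW1, hWV⟩ := exists_open_nhds_one_mul_subset (hVo.mem_nhds hV1)
  refine ⟨W ∩ W⁻¹, hWo.inter hWo.inv, ⟨hW1, by simpa using hW1⟩, ?_⟩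
  have hD : (W ∩ W⁻¹) * (W ∩ W⁻¹)⁻¹ ⊆ V := by
    rw [inter_inv, inv_inv]
    exact (mul_subset_mul inter_subset_left inter_subset_right).trans hWV
  exact (mul_subset_mul hD hD).trans hVU

theorem exists_finite_mul_eq_univ
    (hG : ∀ f : G → ℝ, Continuous f → ∃ M : ℝ, ∀ x, |f x| ≤ M) {U : Set G} (hU : U ∈ 𝓝 1) :
    ∃ T : Set G, T.Finite ∧ T * U = univ := by
  by_contra! h
  obtain ⟨g, -, hg⟩ := exists_seq_of_forall_finset_exists (fun _ ↦ True) (fun a b ↦ b ∉ a • U)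
    fun s _ ↦ by
      obtain ⟨y, hy⟩ := (ne_univ_iff_exists_notMem _).1 (h s s.finite_toSet)
      exact ⟨y, trivial, fun a ha hy' ↦ hy (smul_set_subset_mul ha hy')⟩
  obtain ⟨W, hWo, hW1, hWU⟩ := exists_open_nhds_one_mul_inv_mul_subset hU
  obtain ⟨x, hx⟩ := exists_forall_nhds_frequently_inter_nonempty hG (O := fun n ↦ g n • W)
    (fun n ↦ hWo.smul _) fun n ↦ ⟨g n, 1, hW1, mul_one _⟩
  have hxg : ∃ᶠ n in atTop, x ∈ g n • (W * W⁻¹) :=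
    (hx _ (smul_mem_nhds_self.2 (hWo.mem_nhds hW1))).mono
      fun n ↦ mem_smul_mul_inv_of_inter_nonempty
  obtain ⟨m, hm⟩ := hxg.exists
  obtain ⟨n, hmn, hn⟩ := frequently_atTop.1 hxg (m + 1)
  have hgn := mem_smul_mul_inv_of_inter_nonempty ⟨x, hm, hn⟩
  rw [mul_inv_rev, inv_inv] at hgn
  exact hg m n hmn (smul_set_mono hWU hgn)

variable {H : Type*} [Group H] [TopologicalSpace H] [FirstCountableTopology H] [T2Space H]

theorem closure_image_subset_image_mul_mul_inv
    (hG : ∀ f : G → ℝ, Continuous f → ∃ M : ℝ, ∀ x, |f x| ≤ M)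
    (f : G →* H) (hf : Continuous f) (V : Set G)
    {W : Set G} (hWo : IsOpen W) (hW1 : 1 ∈ W) :
    closure (f '' V) ⊆ f '' (V * (W * W⁻¹)) := by
  intro h hh
  obtain ⟨B, hBo, hB⟩ := (nhds_basis_opens h).exists_antitone_subbasis
  have happrox : ∀ n, ∃ v ∈ V, f v ∈ B n := fun n ↦ by
    obtain ⟨_, hy, v, hv, rfl⟩ := mem_closure_iff_nhds.1 hh _ (hB.mem n)
    exact ⟨v, hv, hy⟩
  choose v hvV hvB using happrox
  obtain ⟨x, hx⟩ := exists_forall_nhds_frequently_inter_nonempty hG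
    (O := fun n ↦ v n • W ∩ f ⁻¹' B n) (fun n ↦ (hWo.smul _).inter ((hBo n).2.preimage hf))
    fun n ↦ ⟨v n, ⟨1, hW1, mul_one _⟩, hvB n⟩
  refine ⟨x, ?_, ?_⟩
  · obtain ⟨n, hn⟩ := (hx _ (smul_mem_nhds_self.2 (hWo.mem_nhds hW1))).exists
    exact smul_set_subset_mul (hvV n) (mem_smul_mul_inv_of_inter_nonempty
      (hn.mono (inter_subset_inter_left _ inter_subset_left)))
  · refine eq_of_nhds_neBot (inf_neBot_iff.2 fun A hA B' hB' ↦ ?_)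
    obtain ⟨m, -, hm⟩ := hB.1.mem_iff.1 hB'
    obtain ⟨n, hmn, y, ⟨-, hyB⟩, hyA⟩ :=
      frequently_atTop.1 (hx _ (hf.continuousAt.preimage_mem_nhds hA)) m
    exact ⟨f y, hyA, hm (hB.antitone hmn hyB)⟩

variable [IsTopologicalGroup H]

theorem image_mem_nhds_one
    (hG : ∀ f : G → ℝ, Continuous f → ∃ M : ℝ, ∀ x, |f x| ≤ M)
    (f : G →* H) (hf : Continuous f) (hsurj : Function.Surjective f)
    {U : Set G} (hU : U ∈ 𝓝 1) : f '' U ∈ 𝓝 1 := by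
  obtain ⟨W, hWo, hW1, hWU⟩ := exists_open_nhds_one_mul_inv_mul_subset hU
  obtain ⟨T, hT, hTW⟩ := exists_finite_mul_eq_univ hG (hWo.mem_nhds hW1)
  have hcover : f '' T * closure (f '' W) = univ := by
    refine eq_univ_of_univ_subset ?_
    calc univ = f '' (T * W) := by rw [hTW, image_univ_of_surjective hsurj]
      _ = f '' T * f '' W := image_mul f
      _ ⊆ f '' T * closure (f '' W) := mul_subset_mul_left subset_closure
  obtain ⟨h₀, hh₀⟩ := (hT.image f).nonempty_interior_of_mul_eq_univ isClosed_closure hcover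
  have hnhds : interior (closure (f '' W)) * {h₀⁻¹} ∈ 𝓝 1 :=
    isOpen_interior.mul_right.mem_nhds ⟨h₀, hh₀, h₀⁻¹, rfl, mul_inv_cancel h₀⟩
  refine mem_of_superset hnhds fun _ ↦ ?_
  rintro ⟨k, hk, _, rfl, rfl⟩
  have hk' : k * h₀⁻¹ ∈ closure (f '' (W * W⁻¹)) :=
    map_mem_closure₂ (f := fun a b ↦ a * b⁻¹) (by fun_prop) (interior_subset hk)
      (interior_subset hh₀) fun _ ⟨a, ha, ha'⟩ _ ⟨b, hb, hb'⟩ ↦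
        ⟨a * b⁻¹, mul_mem_mul ha (inv_mem_inv.2 hb), by simp [← ha', ← hb']⟩
  exact image_mono hWU (closure_image_subset_image_mul_mul_inv hG f hf _ hWo hW1 hk')

end TopologicalGroup

theorem stmt14_general {G H : Type*} [Group G] [TopologicalSpace G] [IsTopologicalGroup G]
    [Group H] [TopologicalSpace H] [IsTopologicalGroup H] [T2Space H]
    [SecondCountableTopology H]
    (hpseudo : ∀ f : G → ℝ, Continuous f → ∃ M : ℝ, ∀ x, |f x| ≤ M)
    (f : G →* H) (hcont : Continuous f) (hsurj : Function.Surjective f) :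
    IsOpenMap f :=
  IsTopologicalGroup.isOpenMap_iff_nhds_one.2 fun _ hs ↦
    mem_of_superset (image_mem_nhds_one hpseudo f hcont hsurj hs) (image_preimage_subset f _)

/-- Every continuous surjective homomorphism from a pseudocompact Hausdorff topological
group onto a second countable Hausdorff topological group is an open map. -/
theorem stmt14 {G H : Type*} [Group G] [TopologicalSpace G] [IsTopologicalGroup G]
    [T2Space G] [Group H] [TopologicalSpace H] [IsTopologicalGroup H] [T2Space H]
    [SecondCountableTopology H]
    (hpseudo : ∀ f : G → ℝ, Continuous f → ∃ M : ℝ, ∀ x, |f x| ≤ M)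
    (f : G →* H) (hcont : Continuous f) (hsurj : Function.Surjective f) :
    IsOpenMap f :=
  stmt14_general hpseudo f hcont hsurj
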